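/- For all ℓ ∈ ℕ₀ and d ≥ 1, the cardinality of the sparse grid satisfies |G_{ℓ,d}| ≤ (ℓ + d − 1)^{d−1} · (2^{ℓ+1} − 1). -/

import Mathlib

/-- The one-dimensional grid `Ω_l` as a finite set. -/
def OmegaF (l : ℕ) : Finset ℚ :=
  (((Finset.Icc 1 (2 ^ (l + 1)) : Finset ℕ)).filter (fun i => Odd i)).image
    (fun i : ℕ => (i : ℚ) / 2 ^ (l + 1))

/-- The set of resolution vectors `l ∈ ℕ₀^d` with `‖l‖₁ ≤ ℓ`. -/
def ResVecs (ℓ d : ℕ) : Finset (Fin d → ℕ) :=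
  (Fintype.piFinset fun _ => Finset.range (ℓ + 1)).filter (fun l => (∑ j, l j) ≤ ℓ)

/-- The sparse grid `G_{ℓ,d}` as a finite set. -/
def SparseGridF (ℓ d : ℕ) : Finset (Fin d → ℚ) :=
  (ResVecs ℓ d).biUnion (fun l => Fintype.piFinset fun j => OmegaF (l j))

lemma omegaF_card_le (l : ℕ) : (OmegaF l).card ≤ 2 ^ l := by
  unfold OmegaF
  refine Finset.card_image_le.trans ?_
  have h : ((Finset.Icc 1 (2 ^ (l + 1))).filter (fun i => Odd i)).card
      ≤ (Finset.range (2 ^ l)).card := by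
    apply Finset.card_le_card_of_injOn (fun i => i / 2)
    · intro i hi
      rw [Finset.mem_coe, Finset.mem_filter] at hi
      simp only [Finset.mem_coe, Finset.mem_filter, Finset.mem_Icc, Odd] at hi
      obtain ⟨⟨h1, h2⟩, k, hk⟩ := hi
      simp only [Finset.mem_coe, Finset.mem_range]
      have h3 : (2:ℕ)^(l+1) = 2^l * 2 := by ring
      omega
    · intro i hi j hj hij
      rw [Finset.mem_coe, Finset.mem_filter] at hi hj
      simp only [Finset.mem_coe, Finset.mem_filter, Finset.mem_Icc, Odd] at hi hj
      obtain ⟨_, ki, hki⟩ := hi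
      obtain ⟨_, kj, hkj⟩ := hj
      have hij' : i / 2 = j / 2 := hij
      omega
  simpa using h

lemma sum_two_pow (n : ℕ) : ∑ i ∈ Finset.range n, 2 ^ i = 2 ^ n - 1 := by
  induction n with
  | zero => simp
  | succ n ih =>
    rw [Finset.sum_range_succ, ih]
    have : 1 ≤ 2^n := Nat.one_le_two_pow
    omega

lemma fiber_card_le (ℓ d s : ℕ) :
    ((ResVecs ℓ (d+1)).filter (fun l => ∑ j, l j = s)).card ≤ (ℓ + d) ^ d := by
  have h : ((ResVecs ℓ (d+1)).filter (fun l => ∑ j, l j = s)).card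
      ≤ ((Fintype.piFinset fun _ : Fin d => Finset.range (ℓ+1))).card := by
    apply Finset.card_le_card_of_injOn (fun l => Fin.init l)
    · intro l hl
      simp only [Finset.mem_coe, Finset.mem_filter, ResVecs, Fintype.mem_piFinset,
        Finset.mem_range] at hl ⊢
      intro j
      exact hl.1.1 _
    · intro a ha b hb hab
      simp only [Finset.mem_coe, Finset.mem_filter, ResVecs] at ha hb
      have hsa := ha.2
      have hsb := hb.2
      rw [Fin.sum_univ_castSucc] at hsa hsb
      have hinit : ∀ j : Fin d, a j.castSucc = b j.castSucc := fun j =>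
        congrFun hab j
      have hsum : ∑ j : Fin d, a j.castSucc = ∑ j : Fin d, b j.castSucc :=
        Finset.sum_congr rfl fun j _ => hinit j
      have hlast : a (Fin.last d) = b (Fin.last d) := by omega
      funext j
      refine Fin.lastCases ?_ ?_ j
      · exact hlast
      · exact hinit
  rw [Fintype.card_piFinset] at h
  simp only [Finset.card_range, Finset.prod_const, Finset.card_univ,
    Fintype.card_fin] at h
  refine h.trans ?_
  rcases Nat.eq_zero_or_pos d with hd0 | hd0
  · subst hd0; simp
  · exact Nat.pow_le_pow_left (Nat.add_le_add_left hd0 ℓ) d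

/-- `|G_{ℓ,d}| ≤ (ℓ + d − 1)^{d−1} · (2^{ℓ+1} − 1)` for `d ≥ 1`. -/
theorem sparseGridF_card_le (ℓ d : ℕ) (hd : 1 ≤ d) :
    (SparseGridF ℓ d).card ≤ (ℓ + d - 1) ^ (d - 1) * (2 ^ (ℓ + 1) - 1) := by
  rcases d with _ | d
  · omega
  have h1 : ℓ + (d + 1) - 1 = ℓ + d := by omega
  have h2 : d + 1 - 1 = d := by omega
  rw [h1, h2]
  calc (SparseGridF ℓ (d+1)).card
      ≤ ∑ l ∈ ResVecs ℓ (d+1), (Fintype.piFinset fun j => OmegaF (l j)).card :=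
        Finset.card_biUnion_le
    _ ≤ ∑ l ∈ ResVecs ℓ (d+1), 2 ^ (∑ j, l j) := by
        apply Finset.sum_le_sum
        intro l _
        rw [Fintype.card_piFinset, ← Finset.prod_pow_eq_pow_sum]
        exact Finset.prod_le_prod' fun j _ => omegaF_card_le (l j)
    _ = ∑ s ∈ Finset.range (ℓ+1),
          ∑ l ∈ (ResVecs ℓ (d+1)).filter (fun l => ∑ j, l j = s), 2 ^ (∑ j, l j) := by
        refine (Finset.sum_fiberwise_of_maps_to ?_ _).symm
        intro l hl
        simp only [ResVecs, Finset.mem_filter] at hl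
        simp only [Finset.mem_range]
        omega
    _ ≤ ∑ s ∈ Finset.range (ℓ+1), (ℓ + d) ^ d * 2 ^ s := by
        apply Finset.sum_le_sum
        intro s _
        have : ∑ l ∈ (ResVecs ℓ (d+1)).filter (fun l => ∑ j, l j = s), 2 ^ (∑ j, l j)
            = ((ResVecs ℓ (d+1)).filter (fun l => ∑ j, l j = s)).card * 2 ^ s := by
          rw [Finset.sum_congr rfl (fun l hl => by
            simp only [Finset.mem_filter] at hl
            rw [hl.2]), Finset.sum_const, smul_eq_mul]
        rw [this]
        exact Nat.mul_le_mul_right _ (fiber_card_le ℓ d s)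
    _ = (ℓ + d) ^ d * (2 ^ (ℓ + 1) - 1) := by
        rw [← Finset.mul_sum, sum_two_pow]
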